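/- arXiv:1610.10077 — 8 statements merged into one kernel-verified Lean document; each statement's English description precedes it below -/
import Mathlib

section
/- If I is an n-absorbing ideal of a commutative ring R and a ∈ √I, then a^n ∈ I. -/
def IsNAbsorbing {R : Type*} [CommRing R] (I : Ideal R) (n : ℕ) : Prop :=
  ∀ a : Fin (n + 1) → R, (∏ j, a j) ∈ I →
    ∃ i, (∏ j ∈ Finset.univ.erase i, a j) ∈ I


theorem radical_pow_mem_of_nAbsorbing {R : Type*} [CommRing R] (n : ℕ) (I : Ideal R)
    (hI : IsNAbsorbing I n) (a : R) (ha : a ∈ I.radical) : a ^ n ∈ I := by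
  obtain ⟨m, hm⟩ := ha
  have key : ∀ k, a ^ (n + k) ∈ I → a ^ n ∈ I := by
    intro k
    induction k with
    | zero => simp
    | succ k ih =>
      intro h
      set f : Fin (n + 1) → R := fun j => if j = 0 then a ^ (k + 1) else a with hf
      have h0 : ∀ j, j ≠ (0 : Fin (n + 1)) → f j = a := fun j hj => if_neg hj
      have herase0 : (∏ j ∈ Finset.univ.erase (0 : Fin (n + 1)), f j) = a ^ n := by
        rw [Finset.prod_congr rfl (fun j hj => h0 j (Finset.ne_of_mem_erase hj)),
          Finset.prod_const, Finset.card_erase_of_mem (Finset.mem_univ _),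
          Finset.card_univ, Fintype.card_fin, Nat.add_sub_cancel]
      have hprod : (∏ j, f j) = a ^ (n + (k + 1)) := by
        rw [← Finset.mul_prod_erase _ _ (Finset.mem_univ (0 : Fin (n + 1))), herase0]
        simp only [hf, if_pos rfl]
        ring
      obtain ⟨i, hi⟩ := hI f (by rw [hprod]; exact h)
      rcases eq_or_ne i 0 with rfl | hne
      · rwa [herase0] at hi
      · have hn1 : 1 ≤ n := by
          by_contra hn
          interval_cases n
          have := i.isLt
          exact hne (Fin.ext (by omega))
        have h0mem : (0 : Fin (n + 1)) ∈ Finset.univ.erase i :=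
          Finset.mem_erase.mpr ⟨hne.symm, Finset.mem_univ _⟩
        have hcard : ((Finset.univ.erase i).erase (0 : Fin (n + 1))).card = n - 1 := by
          rw [Finset.card_erase_of_mem h0mem, Finset.card_erase_of_mem (Finset.mem_univ _),
            Finset.card_univ, Fintype.card_fin]
          omega
        have hrest : (∏ j ∈ (Finset.univ.erase i).erase (0 : Fin (n + 1)), f j) = a ^ (n - 1) := by
          rw [Finset.prod_congr rfl
            (fun j hj => h0 j (Finset.ne_of_mem_erase hj)), Finset.prod_const, hcard]
        have heq : (∏ j ∈ Finset.univ.erase i, f j) = a ^ (n + k) := by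
          rw [← Finset.mul_prod_erase _ _ h0mem, hrest]
          simp only [hf, if_pos rfl]
          rw [← pow_add]
          congr 1
          omega
        exact ih (heq ▸ hi)
  exact key m (by rw [pow_add]; exact Ideal.mul_mem_left _ _ hm)
end

section
/- Let φ : R^m → R^m be an R-linear map that is projectively zero and upper-triangular. Then π_j(φ(e_j)) = 0 for some j ∈ {1,…,m}, i.e., some diagonal entry of the matrix representing φ is zero. -/
open Classical in
noncomputable def auxVec {R : Type*} [CommRing R] (m : ℕ) (hm : 0 < m)
    (φ : (Fin m → R) →ₗ[R] (Fin m → R)) : ℕ → (Fin m → R)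
  | 0 => 0
  | k + 1 =>
    let uk := auxVec m hm φ k
    let j : Fin m := ⟨m - k - 1, by omega⟩
    uk + Pi.single j (if φ uk j ≠ 0 then 0 else 1)

theorem projectively_zero_upper_triangular_diag_zero {R : Type*} [CommRing R]
    (m : ℕ) (hm : 0 < m) (φ : (Fin m → R) →ₗ[R] (Fin m → R))
    (hproj : ∀ v : Fin m → R, ∃ i, φ v i = 0)
    (htri : ∀ i j : Fin m, j < i → φ (Pi.single j 1) i = 0) :
    ∃ j, φ (Pi.single j 1) j = 0 := by
  by_contra hc
  push_neg at hc
  classical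
  have hsingle : ∀ (j : Fin m) (x : R) (i : Fin m),
      φ (Pi.single j x) i = x * φ (Pi.single j 1) i := by
    intro j x i
    have : Pi.single j x = x • (Pi.single j (1 : R) : Fin m → R) := by
      funext t
      simp [Pi.single_apply, mul_ite]
    rw [this, map_smul, Pi.smul_apply, smul_eq_mul]
  have key : ∀ k : ℕ, ∀ i : Fin m, m - k ≤ (i : ℕ) →
      φ (auxVec m hm φ k) i ≠ 0 := by
    intro k
    induction k with
    | zero => intro i hi; exact absurd i.isLt (by omega)
    | succ k ih =>
      intro i hi
      set uk := auxVec m hm φ k with huk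
      set j : Fin m := ⟨m - k - 1, by omega⟩ with hj
      have hstep : auxVec m hm φ (k + 1)
          = uk + Pi.single j (if φ uk j ≠ 0 then 0 else 1) := rfl
      rw [hstep, map_add, Pi.add_apply, hsingle]
      by_cases hij : (i : ℕ) = m - k - 1
      · have hij' : i = j := Fin.ext hij
        rw [hij']
        by_cases h0 : φ uk j ≠ 0
        · simp [h0]
        · push_neg at h0
          simp [h0, hc j]
      · have h1 : (j : ℕ) < (i : ℕ) := by simp [hj]; omega
        have h2 : m - k ≤ (i : ℕ) := by omega
        rw [htri i j h1, mul_zero, add_zero]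
        exact ih i h2
  obtain ⟨i, hi⟩ := hproj (auxVec m hm φ m)
  exact key m i (by omega) hi
end

section
/- If the zero ideal of a commutative ring R is 2-absorbing and a, b are nilpotent elements of R, then ab = 0. In particular (√0)² = 0. -/
theorem two_absorbing_nilpotent_mul {R : Type*} [CommRing R]
    (h : ∀ x y z : R, x * y * z = 0 → x * y = 0 ∨ y * z = 0 ∨ x * z = 0)
    (a b : R) (ha : IsNilpotent a) (hb : IsNilpotent b) :
    a * b = 0 ∧ (nilradical R) ^ 2 = ⊥ := by
  -- every nilpotent has square zero
  have sq0 : ∀ x : R, IsNilpotent x → x * x = 0 := by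
    intro x hx
    obtain ⟨n, hn⟩ := hx
    induction n with
    | zero =>
      rw [pow_zero] at hn
      calc x * x = x * x * 1 := by ring
      _ = 0 := by rw [hn]; ring
    | succ n ih =>
      rcases Nat.lt_or_ge n 2 with h2 | h2
      · interval_cases n
        · rw [pow_one] at hn; simp [hn]
        · simpa [pow_two] using hn
      · have : x * x * x ^ (n - 1) = 0 := by
          rw [← pow_two, ← pow_add]
          have : 2 + (n - 1) = n + 1 := by omega
          rw [this, hn]
        rcases h x x (x ^ (n - 1)) this with h1 | h1 | h1
        · exact h1
        all_goals
          apply ih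
          calc x ^ n = x * x ^ (n-1) := by rw [← pow_succ']; congr 1; omega
          _ = 0 := h1
  have main : ∀ x y : R, IsNilpotent x → IsNilpotent y → x * y = 0 := by
    intro x y hx hy
    have hx2 := sq0 x hx
    have hy2 := sq0 y hy
    have : x * y * (x + y) = 0 := by
      have e : x * y * (x + y) = x * (y * y) + (x * x) * y := by ring
      rw [e, hx2, hy2]; ring
    rcases h x y (x + y) this with h1 | h1 | h1
    · exact h1
    · have : y * x + y * y = 0 := by rw [← mul_add]; exact h1
      rw [hy2, add_zero, mul_comm] at this; exact this
    · have : x * x + x * y = 0 := by rw [← mul_add]; exact h1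
      rw [hx2, zero_add] at this; exact this
  refine ⟨main a b ha hb, ?_⟩
  apply le_antisymm _ bot_le
  rw [pow_two]
  apply Ideal.mul_le.mpr
  intro r hr s hs
  simp only [Ideal.mem_bot]
  exact main r s (mem_nilradical.mp hr) (mem_nilradical.mp hs)
end

section
/- If I is an n-absorbing ideal of a commutative ring R, then (√I)^n ⊆ I; that is, for any a₁,…,a_n ∈ √I the product a₁a₂⋯a_n lies in I. -/
/-!
Fix `z₁, …, z_N ∈ √I` and show that every monomial `z ^ u` of degree at least `n` lies in `I`, by
descending induction on `∑ uᵢ²`. A monomial with some `uᵢ ≥ n` lies in `I` because `x ∈ √I`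
forces `x ^ n ∈ I`; so only the finitely many exponent vectors below `n` matter. For such a `u`,
the induction hypothesis gives `(∑_{i ∈ S} zᵢ) z ^ u ∈ I` for every `S` (raising the degree) and
`z_τ z ^ (u - e_t) ∈ I` whenever `u_t ≤ u_τ` (moving a unit of exponent towards a larger one).
Splitting `z ^ u` into `n` factors and applying `n`-absorption to `(∑_{i ∈ S} zᵢ) z ^ u` gives
`z ^ u ∈ I` or `(∑_{i ∈ S} zᵢ) z ^ (u - e_t) ∈ I` for some `t` in the support of `u`; discarding
the support variables one at a time, largest exponent first, then forces `z ^ u ∈ I`.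
-/

open Finset

section ExponentVector

variable {ι : Type*} [DecidableEq ι]

theorem single_one_le_iff {u : ι → ℕ} {t : ι} : Pi.single t 1 ≤ u ↔ 0 < u t := by
  refine ⟨fun h => Nat.lt_of_succ_le (by simpa using h t), fun h i => ?_⟩
  rcases eq_or_ne i t with rfl | hi
  · simpa using Nat.one_le_of_lt h
  · simp [hi]

theorem add_single_apply_le (u : ι → ℕ) (s i : ι) :
    (u + Pi.single s 1 : ι → ℕ) i ≤ u i + 1 := by
  rcases eq_or_ne i s with rfl | hi <;> simp [*]

variable [Fintype ι]

theorem sum_add_single (u : ι → ℕ) (s : ι) :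
    ∑ i, (u + Pi.single s 1 : ι → ℕ) i = ∑ i, u i + 1 := by
  simp [sum_add_distrib]

theorem sum_sq_add_single (u : ι → ℕ) (s : ι) :
    ∑ i, (u + Pi.single s 1 : ι → ℕ) i ^ 2 = ∑ i, u i ^ 2 + 2 * u s + 1 := by
  simp [add_sq, sum_add_distrib, Pi.single_apply, ite_pow]

theorem exists_sum_single_le {n : ℕ} {u : ι → ℕ} (h : n ≤ ∑ i, u i) :
    ∃ t : Fin n → ι, ∑ j, Pi.single (t j) 1 ≤ u := by
  induction n generalizing u with
  | zero => exact ⟨finZeroElim, by simp⟩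
  | succ n ih =>
    obtain ⟨i, -, hi⟩ := exists_ne_zero_of_sum_ne_zero (by omega : ∑ i, u i ≠ 0)
    have hu : u - Pi.single i 1 + Pi.single i 1 = u :=
      tsub_add_cancel_of_le (single_one_le_iff.2 (Nat.pos_of_ne_zero hi))
    have hsum := sum_add_single (u - Pi.single i 1) i
    rw [hu] at hsum
    obtain ⟨t, ht⟩ := ih (u := u - Pi.single i 1) (by omega)
    refine ⟨Fin.cons i t, ?_⟩
    rw [Fin.sum_univ_succ]
    simp only [Fin.cons_zero, Fin.cons_succ]
    calc Pi.single i 1 + ∑ j, Pi.single (t j) 1 ≤ Pi.single i 1 + (u - Pi.single i 1) :=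
          add_le_add le_rfl ht
      _ = u := by rw [add_comm, hu]

end ExponentVector

section Monomial

variable {ι M : Type*} [Fintype ι] [CommMonoid M]

def prodPow (z : ι → M) (u : ι → ℕ) : M := ∏ i, z i ^ u i

variable (z : ι → M)

theorem prodPow_add (u v : ι → ℕ) : prodPow z (u + v) = prodPow z u * prodPow z v := by
  simp only [prodPow, Pi.add_apply, pow_add, prod_mul_distrib]

theorem prodPow_sum {κ : Type*} (s : Finset κ) (f : κ → ι → ℕ) :
    prodPow z (∑ k ∈ s, f k) = ∏ k ∈ s, prodPow z (f k) := by
  simp only [prodPow, Finset.sum_apply, ← prod_pow_eq_pow_sum]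
  exact prod_comm

theorem pow_dvd_prodPow (u : ι → ℕ) (i : ι) : z i ^ u i ∣ prodPow z u :=
  dvd_prod_of_mem _ (mem_univ i)

variable [DecidableEq ι]

theorem prodPow_single (i : ι) : prodPow z (Pi.single i 1) = z i := by
  rw [prodPow, prod_eq_single i (fun j _ hj => by simp [hj]) (by simp)]
  simp

theorem prodPow_add_single (u : ι → ℕ) (i : ι) :
    prodPow z (u + Pi.single i 1) = prodPow z u * z i := by
  rw [prodPow_add, prodPow_single]

theorem mul_prodPow_sub_single {u : ι → ℕ} {t : ι} (ht : 0 < u t) :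
    z t * prodPow z (u - Pi.single t 1) = prodPow z u := by
  rw [mul_comm, ← prodPow_add_single, tsub_add_cancel_of_le (single_one_le_iff.2 ht)]

end Monomial

section Ideal

variable {R : Type*} [CommRing R] {I : Ideal R}

/-- If `W` is emptied by repeatedly removing an element `τ` of maximal weight, the property
`∀ S ⊆ W, ∃ t ∈ W, (∑ i ∈ S, z i) * c t ∈ I` survives each removal unless `m ∈ I`: a witness
`t = τ` for `S` is traded, via `S ∪ {τ}` and `hcross`, for a witness other than `τ`. -/
theorem mem_of_forall_subset_exists_sum_mul_mem {ι β : Type*} [DecidableEq ι] [LinearOrder β]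
    (w : ι → β) {z c : ι → R} {m : R} (W : Finset ι) (hzc : ∀ t ∈ W, z t * c t = m)
    (hcross : ∀ τ ∈ W, ∀ t ∈ W, t ≠ τ → w t ≤ w τ → z τ * c t ∈ I)
    (hsum : ∀ S ⊆ W, m ∈ I ∨ ∃ t ∈ W, (∑ i ∈ S, z i) * c t ∈ I) : m ∈ I := by
  by_contra hm
  simp only [hm, false_or] at hsum
  induction W using Finset.strongInduction with
  | H W ih =>
  obtain rfl | hW := W.eq_empty_or_nonempty
  · simpa using hsum ∅ (empty_subset _)
  obtain ⟨τ, hτ, hmax⟩ := W.exists_max_image w hW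
  refine ih (W.erase τ) (erase_ssubset hτ) (fun t ht => hzc t (mem_of_mem_erase ht))
    (fun τ' hτ' t ht => hcross τ' (mem_of_mem_erase hτ') t (mem_of_mem_erase ht)) fun S hS => ?_
  have hτS : τ ∉ S := fun h => (mem_erase.1 (hS h)).1 rfl
  have hSW : S ⊆ W := hS.trans (erase_subset _ _)
  obtain ⟨t, ht, hSt⟩ := hsum S hSW
  by_cases htτ : t = τ
  swap
  · exact ⟨t, mem_erase.2 ⟨htτ, ht⟩, hSt⟩
  subst htτ
  obtain ⟨t', ht', h'⟩ := hsum (insert t S) (insert_subset ht hSW)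
  rw [sum_insert hτS, add_mul] at h'
  by_cases ht't : t' = t
  · subst ht't
    exact (hm (hzc t' ht' ▸ (I.add_mem_iff_left hSt).1 h')).elim
  · exact ⟨t', mem_erase.2 ⟨ht't, ht'⟩,
      (I.add_mem_iff_right (hcross t ht t' ht' ht't (hmax t' ht'))).1 h'⟩

namespace IsNAbsorbing

variable {n : ℕ}

theorem mem_or_exists_mul_prod_erase_mem (hI : IsNAbsorbing I n) {a : R} {b : Fin n → R}
    (h : a * ∏ j, b j ∈ I) : ∏ j, b j ∈ I ∨ ∃ j, a * ∏ l ∈ univ.erase j, b l ∈ I := by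
  obtain ⟨i, hi⟩ := hI (Fin.cons a b) (by rwa [Fin.prod_univ_succ])
  cases i using Fin.cases with
  | zero =>
    rw [Fin.univ_succ, erase_cons, prod_map] at hi
    exact .inl hi
  | succ j =>
    have herase : (univ.map ⟨Fin.succ, Fin.succ_injective n⟩).erase j.succ =
        (univ.erase j).map ⟨Fin.succ, Fin.succ_injective n⟩ :=
      (map_erase _ _ _).symm
    rw [Fin.univ_succ, erase_cons_of_ne _ (Fin.succ_ne_zero j).symm, prod_cons, herase,
      prod_map] at hi
    exact .inr ⟨j, hi⟩

theorem pow_mem_of_mem_radical (hI : IsNAbsorbing I n) {x : R} (hx : x ∈ I.radical) :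
    x ^ n ∈ I := by
  obtain ⟨m, hm⟩ := hx
  induction m with
  | zero => exact I.mem_of_dvd (by simp) hm
  | succ m ih =>
    by_cases hmn : m + 1 ≤ n
    · exact I.mem_of_dvd (pow_dvd_pow x hmn) hm
    have hsplit : x ^ (m + 1) = x ^ (m + 1 - n) * ∏ _j : Fin n, x := by
      rw [prod_const, card_univ, Fintype.card_fin, ← pow_add]
      congr 1
      omega
    rcases hI.mem_or_exists_mul_prod_erase_mem (hsplit ▸ hm) with h | ⟨j, hj⟩
    · simpa using h
    · refine ih ?_
      rw [prod_const, card_erase_of_mem (mem_univ j), card_univ, Fintype.card_fin,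
        ← pow_add] at hj
      convert hj using 2
      have := j.pos
      omega

variable {ι : Type*} [Fintype ι] [DecidableEq ι]

theorem mem_or_exists_mul_prodPow_sub_single_mem (hI : IsNAbsorbing I n) (z : ι → R) {a : R}
    {u : ι → ℕ} (hdeg : n ≤ ∑ i, u i) (h : a * prodPow z u ∈ I) :
    prodPow z u ∈ I ∨ ∃ t, 0 < u t ∧ a * prodPow z (u - Pi.single t 1) ∈ I := by
  obtain ⟨t, ht⟩ := exists_sum_single_le hdeg
  have hu : u - ∑ j, Pi.single (t j) 1 + ∑ j, Pi.single (t j) 1 = u := tsub_add_cancel_of_le ht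
  have hprod : prodPow z u = prodPow z (u - ∑ j, Pi.single (t j) 1) * ∏ j, z (t j) := by
    conv_lhs => rw [← hu]
    simp only [prodPow_add, prodPow_sum, prodPow_single]
  rcases hI.mem_or_exists_mul_prod_erase_mem (a := a * prodPow z (u - ∑ j, Pi.single (t j) 1))
      (b := fun j => z (t j)) (by rwa [mul_assoc, ← hprod]) with h | ⟨j, hj⟩
  · exact .inl (hprod ▸ I.mul_mem_left _ h)
  have hle : Pi.single (t j) 1 ≤ u :=
    (single_le_sum (f := fun j => Pi.single (t j) 1) (fun _ _ => zero_le) (mem_univ j)).trans ht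
  have hdecomp : u - ∑ j, Pi.single (t j) 1 + ∑ l ∈ univ.erase j, Pi.single (t l) 1 =
      u - Pi.single (t j) 1 :=
    eq_tsub_of_add_eq (by rw [add_assoc, sum_erase_add _ _ (mem_univ j), hu])
  refine .inr ⟨t j, single_one_le_iff.1 hle, ?_⟩
  simpa only [← hdecomp, prodPow_add, prodPow_sum, prodPow_single, ← mul_assoc] using hj

theorem prodPow_mem_of_forall_sum_sq_lt (hI : IsNAbsorbing I n) (z : ι → R) {u : ι → ℕ}
    (hdeg : n ≤ ∑ i, u i)
    (h : ∀ v τ, v ≤ u + Pi.single τ 1 → ∑ i, u i ^ 2 < ∑ i, v i ^ 2 → n ≤ ∑ i, v i →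
      prodPow z v ∈ I) :
    prodPow z u ∈ I := by
  refine mem_of_forall_subset_exists_sum_mul_mem u (univ.filter (0 < u ·))
    (c := fun t => prodPow z (u - Pi.single t 1))
    (fun t ht => mul_prodPow_sub_single z (mem_filter.1 ht).2) ?_ fun S _ => ?_
  · intro τ _ t ht htτ hle
    replace ht := (mem_filter.1 ht).2
    set w := u - Pi.single t 1 with hw
    have hwu : w + Pi.single t 1 = u := tsub_add_cancel_of_le (single_one_le_iff.2 ht)
    have hwτ : w τ = u τ := by simp [hw, htτ.symm]
    have hwt : w t + 1 = u t := by
      rw [hw, Pi.sub_apply, Pi.single_eq_same]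
      omega
    rw [mul_comm, ← prodPow_add_single]
    refine h _ τ (add_le_add tsub_le_self le_rfl) ?_ ?_
    · rw [← hwu, sum_sq_add_single, sum_sq_add_single]
      omega
    · rwa [sum_add_single, ← sum_add_single w t, hwu]
  · have hS : (∑ i ∈ S, z i) * prodPow z u ∈ I := by
      rw [sum_mul]
      refine sum_mem fun i _ => ?_
      rw [mul_comm, ← prodPow_add_single]
      refine h _ i le_rfl ?_ ?_
      · rw [sum_sq_add_single]
        omega
      · rw [sum_add_single]
        omega
    rcases hI.mem_or_exists_mul_prodPow_sub_single_mem z hdeg hS with hu | ⟨t, ht, hSt⟩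
    · exact .inl hu
    · exact .inr ⟨t, mem_filter.2 ⟨mem_univ t, ht⟩, hSt⟩

theorem prodPow_mem (hI : IsNAbsorbing I n) {z : ι → R} (hz : ∀ i, z i ∈ I.radical)
    (u : ι → ℕ) (hdeg : n ≤ ∑ i, u i) : prodPow z u ∈ I := by
  induction hk : ∑ _i : ι, n ^ 2 - ∑ i, u i ^ 2 using Nat.strong_induction_on generalizing u with
  | _ k ih =>
  by_cases hbig : ∃ i, n ≤ u i
  · obtain ⟨i, hi⟩ := hbig
    exact I.mem_of_dvd ((pow_dvd_pow _ hi).trans (pow_dvd_prodPow z u i))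
      (hI.pow_mem_of_mem_radical (hz i))
  simp only [not_exists, not_le] at hbig
  refine hI.prodPow_mem_of_forall_sum_sq_lt z hdeg fun v τ hv hlt hdeg' => ?_
  have hbound : ∑ i, v i ^ 2 ≤ ∑ _i : ι, n ^ 2 := sum_le_sum fun i _ => by
    have hvi : v i ≤ u i + 1 := (hv i).trans (add_single_apply_le u τ i)
    have hui := hbig i
    gcongr
    omega
  exact ih _ (by omega) v hdeg' rfl

end IsNAbsorbing

end Ideal

theorem radical_pow_le_of_nAbsorbing_general {R : Type*} [CommRing R] (n : ℕ)
    (I : Ideal R) (hI : IsNAbsorbing I n) : I.radical ^ n ≤ I := by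
  rw [Submodule.pow_eq_span_pow_set, Submodule.span_le]
  intro x hx
  obtain ⟨f, rfl⟩ := Set.mem_pow.1 hx
  simpa [prodPow, List.prod_ofFn] using
    hI.prodPow_mem (fun i => (f i).2) (fun _ => 1) (by simp)

theorem radical_pow_le_of_nAbsorbing {R : Type*} [CommRing R] (n : ℕ) (hn : 0 < n)
    (I : Ideal R) (hI : IsNAbsorbing I n) : I.radical ^ n ≤ I :=
  radical_pow_le_of_nAbsorbing_general n I hI
end

section
/- Let I be a 3-absorbing ideal of a commutative ring R such that √I = P is a prime ideal, and let x ∈ P. Then the ideal (I : x) = {r ∈ R | rx ∈ I} is a 2-absorbing ideal of R. -/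
lemma four_absorb {R : Type*} [CommRing R] {I : Ideal R} (hI : IsNAbsorbing I 3)
    (a b c d : R) (h : a*b*c*d ∈ I) :
    a*b*c ∈ I ∨ a*b*d ∈ I ∨ a*c*d ∈ I ∨ b*c*d ∈ I := by
  obtain ⟨i, hi⟩ := hI ![a,b,c,d] (by simpa [Fin.prod_univ_four] using h)
  fin_cases i <;>
    simp only [show ∀ i : Fin 4, Finset.univ.erase i =
        (Finset.univ.filter (· ≠ i)) from fun i => by ext j; simp [Finset.mem_erase, and_comm],
      show (Finset.univ.filter (· ≠ (⟨0, by omega⟩ : Fin 4))) = {1,2,3} from by decide,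
      show (Finset.univ.filter (· ≠ (⟨1, by omega⟩ : Fin 4))) = {0,2,3} from by decide,
      show (Finset.univ.filter (· ≠ (⟨2, by omega⟩ : Fin 4))) = {0,1,3} from by decide,
      show (Finset.univ.filter (· ≠ (⟨3, by omega⟩ : Fin 4))) = {0,1,2} from by decide
      ] at hi <;>
    rw [Finset.prod_insert (by decide), Finset.prod_insert (by decide),
      Finset.prod_singleton] at hi <;>
    simp only [Matrix.cons_val_zero, Matrix.cons_val_one, Matrix.head_cons,
      Matrix.cons_val_two, Matrix.tail_cons, Matrix.cons_val_three] at hi <;>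
    rw [← mul_assoc] at hi <;> tauto

lemma cube_mem {R : Type*} [CommRing R] {I : Ideal R} (hI : IsNAbsorbing I 3)
    {y : R} (hy : y ∈ I.radical) : y^3 ∈ I := by
  obtain ⟨n, hn⟩ := hy
  have key : ∀ n, y^n ∈ I → y^3 ∈ I := by
    intro n
    induction n using Nat.strong_induction_on with
    | _ n ih =>
      intro hn
      rcases le_or_gt n 3 with h | h
      · have : y^3 = y^n * y^(3-n) := by rw [← pow_add]; congr 1; omega
        rw [this]; exact I.mul_mem_right _ hn
      · have heq : y*y*y*y^(n-3) = y^n := by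
          rw [show y*y*y*y^(n-3) = y^3 * y^(n-3) from by ring, ← pow_add]
          congr 1; omega
        rcases four_absorb hI y y y (y^(n-3)) (by rw [heq]; exact hn) with h' | h' | h' | h'
        · rwa [show y*y*y = y^3 from by ring] at h'
        · have : y*y*y^(n-3) = y^(n-1) := by
            rw [show y*y*y^(n-3) = y^2 * y^(n-3) from by ring, ← pow_add]
            congr 1; omega
          rw [this] at h'
          exact ih (n-1) (by omega) h'
        · have : y*y*y^(n-3) = y^(n-1) := by
            rw [show y*y*y^(n-3) = y^2 * y^(n-3) from by ring, ← pow_add]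
            congr 1; omega
          rw [this] at h'
          exact ih (n-1) (by omega) h'
        · have : y*y*y^(n-3) = y^(n-1) := by
            rw [show y*y*y^(n-3) = y^2 * y^(n-3) from by ring, ← pow_add]
            congr 1; omega
          rw [this] at h'
          exact ih (n-1) (by omega) h'
  exact key n hn

lemma mix_mem {R : Type*} [CommRing R] {I : Ideal R} (hI : IsNAbsorbing I 3)
    {p q : R} (hp3 : p^3 ∈ I) (hq3 : q^3 ∈ I) : p*q^2 ∈ I := by
  -- Step 1 : p^2*q^2 ∈ I
  have hpq2 : p^2*q^2 ∈ I := by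
    have hprod : p*q*(p+q)*(p*q) ∈ I := by
      have h1 : p^3*q^2 ∈ I := I.mul_mem_right _ hp3
      have h2 : p^2*q^3 ∈ I := I.mul_mem_left _ hq3
      have := I.add_mem h1 h2
      rwa [show p^3*q^2 + p^2*q^3 = p*q*(p+q)*(p*q) from by ring] at this
    rcases four_absorb hI p q (p+q) (p*q) hprod with h | h | h | h
    · have := I.sub_mem (I.mul_mem_right q h) (I.mul_mem_left p hq3)
      rwa [show p*q*(p+q)*q - p*q^3 = p^2*q^2 from by ring] at this
    · rwa [show p*q*(p*q) = p^2*q^2 from by ring] at h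
    · have := I.sub_mem h (I.mul_mem_right q hp3)
      rwa [show p*(p+q)*(p*q) - p^3*q = p^2*q^2 from by ring] at this
    · have := I.sub_mem h (I.mul_mem_left p hq3)
      rwa [show q*(p+q)*(p*q) - p*q^3 = p^2*q^2 from by ring] at this
  -- Step 2 : p^2*q ∈ I or p*q^2 ∈ I
  have step2 : p^2*q ∈ I ∨ p*q^2 ∈ I := by
    rcases four_absorb hI p p q q
        (by rwa [show p*p*q*q = p^2*q^2 from by ring]) with h | h | h | h
    · exact Or.inl (by rwa [show p*p*q = p^2*q from by ring] at h)
    · exact Or.inl (by rwa [show p*p*q = p^2*q from by ring] at h)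
    · exact Or.inr (by rwa [show p*q*q = p*q^2 from by ring] at h)
    · exact Or.inr (by rwa [show p*q*q = p*q^2 from by ring] at h)
  rcases step2 with hp2q | h
  · -- from p^2*q ∈ I derive p*q^2 ∈ I
    have hprod2 : q*q*p*(p+q) ∈ I := by
      have := I.add_mem hpq2 (I.mul_mem_left p hq3)
      rwa [show p^2*q^2 + p*q^3 = q*q*p*(p+q) from by ring] at this
    rcases four_absorb hI q q p (p+q) hprod2 with h | h | h | h
    · rwa [show q*q*p = p*q^2 from by ring] at h
    · have := I.sub_mem h hq3
      rwa [show q*q*(p+q) - q^3 = p*q^2 from by ring] at this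
    · have := I.sub_mem h hp2q
      rwa [show q*p*(p+q) - p^2*q = p*q^2 from by ring] at this
    · have := I.sub_mem h hp2q
      rwa [show q*p*(p+q) - p^2*q = p*q^2 from by ring] at this
  · exact h

lemma claimC {R : Type*} [CommRing R] {I : Ideal R} (hI : IsNAbsorbing I 3)
    (a b c x : R) (habc : a*b*c ∈ I) (hx3 : x^3 ∈ I) (hax2 : a*x^2 ∈ I) :
    a*b*x ∈ I ∨ a*c*x ∈ I ∨ b*c*x ∈ I := by
  have goalBx : b*x^2 ∈ I → a*b*x ∈ I ∨ a*c*x ∈ I ∨ b*c*x ∈ I := by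
    intro hbx2
    have hprod : a*b*x*(c+x) ∈ I := by
      have := I.add_mem (I.mul_mem_right x habc) (I.mul_mem_left a hbx2)
      rwa [show a*b*c*x + a*(b*x^2) = a*b*x*(c+x) from by ring] at this
    rcases four_absorb hI a b x (c+x) hprod with h | h | h | h
    · exact Or.inl h
    · exact Or.inl (by
        have := I.sub_mem h habc
        rwa [show a*b*(c+x) - a*b*c = a*b*x from by ring] at this)
    · exact Or.inr (Or.inl (by
        have := I.sub_mem h hax2
        rwa [show a*x*(c+x) - a*x^2 = a*c*x from by ring] at this))
    · exact Or.inr (Or.inr (by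
        have := I.sub_mem h hbx2
        rwa [show b*x*(c+x) - b*x^2 = b*c*x from by ring] at this))
  have goalCx : c*x^2 ∈ I → a*b*x ∈ I ∨ a*c*x ∈ I ∨ b*c*x ∈ I := by
    intro hcx2
    have hprod : a*c*x*(b+x) ∈ I := by
      have := I.add_mem (I.mul_mem_right x habc) (I.mul_mem_left a hcx2)
      rwa [show a*b*c*x + a*(c*x^2) = a*c*x*(b+x) from by ring] at this
    rcases four_absorb hI a c x (b+x) hprod with h | h | h | h
    · exact Or.inr (Or.inl h)
    · exact Or.inr (Or.inl (by
        have := I.sub_mem h habc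
        rwa [show a*c*(b+x) - a*b*c = a*c*x from by ring] at this))
    · exact Or.inl (by
        have := I.sub_mem h hax2
        rwa [show a*x*(b+x) - a*x^2 = a*b*x from by ring] at this)
    · exact Or.inr (Or.inr (by
        have := I.sub_mem h hcx2
        rwa [show c*x*(b+x) - c*x^2 = b*c*x from by ring] at this))
  have goalBCx : b*c*x^2 ∈ I → a*b*x ∈ I ∨ a*c*x ∈ I ∨ b*c*x ∈ I := by
    intro hbcx2
    rcases four_absorb hI b c x x
        (by rwa [show b*c*x*x = b*c*x^2 from by ring]) with h | h | h | h
    · exact Or.inr (Or.inr h)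
    · exact Or.inr (Or.inr h)
    · exact goalBx (by rwa [show b*x*x = b*x^2 from by ring] at h)
    · exact goalCx (by rwa [show c*x*x = c*x^2 from by ring] at h)
  have hQ1 : b*c*(a+x)*x^2 ∈ I := by
    have := I.add_mem (I.mul_mem_right (x^2) habc) (I.mul_mem_left (b*c) hx3)
    rwa [show a*b*c*x^2 + b*c*x^3 = b*c*(a+x)*x^2 from by ring] at this
  rcases four_absorb hI b c (a+x) (x^2) hQ1 with h | h | h | h
  · exact Or.inr (Or.inr (by
      have := I.sub_mem h habc
      rwa [show b*c*(a+x) - a*b*c = b*c*x from by ring] at this))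
  · exact goalBCx h
  · -- a*b*x^2 ∈ I
    have habx2 : a*b*x^2 ∈ I := by
      have := I.sub_mem h (I.mul_mem_left b hx3)
      rwa [show b*(a+x)*x^2 - b*x^3 = a*b*x^2 from by ring] at this
    have hprod : a*b*x*(c+x) ∈ I := by
      have := I.add_mem (I.mul_mem_right x habc) habx2
      rwa [show a*b*c*x + a*b*x^2 = a*b*x*(c+x) from by ring] at this
    rcases four_absorb hI a b x (c+x) hprod with h' | h' | h' | h'
    · exact Or.inl h'
    · exact Or.inl (by
        have := I.sub_mem h' habc
        rwa [show a*b*(c+x) - a*b*c = a*b*x from by ring] at this)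
    · exact Or.inr (Or.inl (by
        have := I.sub_mem h' hax2
        rwa [show a*x*(c+x) - a*x^2 = a*c*x from by ring] at this))
    · refine goalBCx ?_
      have := I.sub_mem (I.mul_mem_right x h') (I.mul_mem_left b hx3)
      rwa [show b*x*(c+x)*x - b*x^3 = b*c*x^2 from by ring] at this
  · -- a*c*x^2 ∈ I
    have hacx2 : a*c*x^2 ∈ I := by
      have := I.sub_mem h (I.mul_mem_left c hx3)
      rwa [show c*(a+x)*x^2 - c*x^3 = a*c*x^2 from by ring] at this
    have hprod : a*c*x*(b+x) ∈ I := by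
      have := I.add_mem (I.mul_mem_right x habc) hacx2
      rwa [show a*b*c*x + a*c*x^2 = a*c*x*(b+x) from by ring] at this
    rcases four_absorb hI a c x (b+x) hprod with h' | h' | h' | h'
    · exact Or.inr (Or.inl h')
    · exact Or.inr (Or.inl (by
        have := I.sub_mem h' habc
        rwa [show a*c*(b+x) - a*b*c = a*c*x from by ring] at this))
    · exact Or.inl (by
        have := I.sub_mem h' hax2
        rwa [show a*x*(b+x) - a*x^2 = a*b*x from by ring] at this)
    · refine goalBCx ?_
      have := I.sub_mem (I.mul_mem_right x h') (I.mul_mem_left c hx3)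
      rwa [show c*x*(b+x)*x - c*x^3 = b*c*x^2 from by ring] at this

theorem colon_two_absorbing {R : Type*} [CommRing R] (I : Ideal R)
    (hI : IsNAbsorbing I 3) (hP : I.radical.IsPrime) (x : R) (hx : x ∈ I.radical) :
    IsNAbsorbing (I.colon (Ideal.span {x})) 2 := by
  intro a ha
  rw [Fin.prod_univ_three, Ideal.mem_colon_span_singleton] at ha
  have hx3 : x^3 ∈ I := cube_mem hI hx
  have key : a 1 * a 2 ∈ I.colon (Ideal.span {x}) ∨
      a 0 * a 2 ∈ I.colon (Ideal.span {x}) ∨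
      a 0 * a 1 ∈ I.colon (Ideal.span {x}) := by
    simp only [Ideal.mem_colon_span_singleton]
    rcases four_absorb hI (a 0) (a 1) (a 2) x ha with h | h | h | h
    · -- a0*a1*a2 ∈ I
      have hrad : a 0 * a 1 * a 2 ∈ I.radical := Ideal.le_radical h
      rcases hP.mem_or_mem hrad with h01 | h2
      · rcases hP.mem_or_mem h01 with h0 | h1
        · have hax2 : a 0 * x^2 ∈ I := mix_mem hI (cube_mem hI h0) hx3
          rcases claimC hI (a 0) (a 1) (a 2) x h hx3 hax2 with h' | h' | h'
          · exact Or.inr (Or.inr h')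
          · exact Or.inr (Or.inl h')
          · exact Or.inl h'
        · have hax2 : a 1 * x^2 ∈ I := mix_mem hI (cube_mem hI h1) hx3
          have habc : a 1 * a 0 * a 2 ∈ I := by
            rwa [show a 1 * a 0 * a 2 = a 0 * a 1 * a 2 from by ring]
          rcases claimC hI (a 1) (a 0) (a 2) x habc hx3 hax2 with h' | h' | h'
          · exact Or.inr (Or.inr (by
              rwa [show a 0 * a 1 * x = a 1 * a 0 * x from by ring]))
          · exact Or.inl h'
          · exact Or.inr (Or.inl h')
      · have hax2 : a 2 * x^2 ∈ I := mix_mem hI (cube_mem hI h2) hx3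
        have habc : a 2 * a 0 * a 1 ∈ I := by
          rwa [show a 2 * a 0 * a 1 = a 0 * a 1 * a 2 from by ring]
        rcases claimC hI (a 2) (a 0) (a 1) x habc hx3 hax2 with h' | h' | h'
        · exact Or.inr (Or.inl (by
            rwa [show a 0 * a 2 * x = a 2 * a 0 * x from by ring]))
        · exact Or.inl (by
            rwa [show a 1 * a 2 * x = a 2 * a 1 * x from by ring])
        · exact Or.inr (Or.inr h')
    · exact Or.inr (Or.inr h)
    · exact Or.inr (Or.inl h)
    · exact Or.inl h
  rcases key with h | h | h
  · exact ⟨0, by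
      rw [show (Finset.univ.erase (0 : Fin 3)) = {1,2} from by decide,
        Finset.prod_insert (by decide), Finset.prod_singleton]
      exact h⟩
  · exact ⟨1, by
      rw [show (Finset.univ.erase (1 : Fin 3)) = {0,2} from by decide,
        Finset.prod_insert (by decide), Finset.prod_singleton]
      exact h⟩
  · exact ⟨2, by
      rw [show (Finset.univ.erase (2 : Fin 3)) = {0,1} from by decide,
        Finset.prod_insert (by decide), Finset.prod_singleton]
      exact h⟩
end

section
/- Let I be a 3-absorbing ideal of a commutative ring R with √I = P prime, and let x, y, z ∈ P. Then either (I : xz) ⊆ (I : xy) or (I : xy) ⊆ (I : xz); furthermore, (I : xy) is a prime (1-absorbing) ideal of R whenever xy ∉ I. -/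
section Aux
open Ideal
variable {R : Type*} [CommRing R] {I : Ideal R}

theorem abs4 (hI : IsNAbsorbing I 3) {p q r s : R} (h : p*q*r*s ∈ I) :
    p*q*r ∈ I ∨ p*q*s ∈ I ∨ p*r*s ∈ I ∨ q*r*s ∈ I := by
  obtain ⟨i, hi⟩ := hI ![p,q,r,s] (by simpa [Fin.prod_univ_four] using h)
  have h4 : i = 0 ∨ i = 1 ∨ i = 2 ∨ i = 3 := by fin_cases i <;> simp
  rcases h4 with rfl | rfl | rfl | rfl
  · right; right; right
    have e : (Finset.univ.erase (0 : Fin 4)) = {1,2,3} := by decide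
    rw [e] at hi; simpa [Finset.prod_insert, mul_assoc] using hi
  · right; right; left
    have e : (Finset.univ.erase (1 : Fin 4)) = {0,2,3} := by decide
    rw [e] at hi; simpa [Finset.prod_insert, mul_assoc] using hi
  · right; left
    have e : (Finset.univ.erase (2 : Fin 4)) = {0,1,3} := by decide
    rw [e] at hi; simpa [Finset.prod_insert, mul_assoc] using hi
  · left
    have e : (Finset.univ.erase (3 : Fin 4)) = {0,1,2} := by decide
    rw [e] at hi; simpa [Finset.prod_insert, mul_assoc] using hi

theorem memc {x y : R} (h : x = y) (hy : y ∈ I) : x ∈ I := h ▸ hy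


theorem cube_mem_s10 (hI : IsNAbsorbing I 3) {w : R} (hw : w ∈ I.radical) :
    w * w * w ∈ I := by
  obtain ⟨n, hn⟩ := hw
  induction n using Nat.strong_induction_on with
  | _ n ih =>
    rcases le_or_gt n 3 with h3 | h3
    · have : w * w * w = w ^ n * w ^ (3 - n) := by
        rw [← pow_add]
        have : n + (3 - n) = 3 := by omega
        rw [this]; ring
      rw [this]; exact I.mul_mem_right _ hn
    · have hsplit : w * w * w * w ^ (n - 3) = w ^ n := by
        rw [show w * w * w = w ^ 3 by ring, ← pow_add]
        congr 1; omega
      rcases abs4 hI (memc hsplit hn) with h | h | h | h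
      · exact h
      all_goals
      · refine ih (n - 1) (by omega) (memc ?_ h)
        rw [show n - 1 = 2 + (n - 3) by omega, pow_add]; ring

theorem triple_mem (hI : IsNAbsorbing I 3) {u v w : R}
    (hu : u ∈ I.radical) (hv : v ∈ I.radical) (hw : w ∈ I.radical) :
    u * v * w ∈ I := by
  -- step 1: u^2 v^2 ∈ I for any u v in radical
  have sq2 : ∀ a b : R, a ∈ I.radical → b ∈ I.radical → a*a*b*b ∈ I := by
    intro a b ha hb
    have ha3 := cube_mem_s10 hI ha
    have hb3 := cube_mem_s10 hI hb
    have hprod : (a*a)*b*b*(a+b) ∈ I := by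
      refine memc (y := b*b*(a*a*a) + a*a*(b*b*b)) (by ring) ?_
      exact I.add_mem (I.mul_mem_left _ ha3) (I.mul_mem_left _ hb3)
    rcases abs4 hI hprod with h | h | h | h
    · exact memc (by ring) h
    · refine memc (y := (a*a)*b*(a+b) - b*(a*a*a)) (by ring) ?_
      exact I.sub_mem h (I.mul_mem_left _ ha3)
    · refine memc (y := (a*a)*b*(a+b) - b*(a*a*a)) (by ring) ?_
      exact I.sub_mem h (I.mul_mem_left _ ha3)
    · -- b*b*(a+b) ∈ I, i.e. ab^2 + b^3 ∈ I so ab^2 ∈ I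
      have hab2 : a*b*b ∈ I := by
        refine memc (y := b*b*(a+b) - b*b*b) (by ring) ?_
        exact I.sub_mem h hb3
      exact memc (y := a * (a*b*b)) (by ring) (I.mul_mem_left _ hab2)
  -- step 2: a^2 b ∈ I
  have sqm : ∀ a b : R, a ∈ I.radical → b ∈ I.radical → a*a*b ∈ I := by
    intro a b ha hb
    have h22 := sq2 a b ha hb
    have ha3 := cube_mem_s10 hI ha
    have step : a*b*b ∈ I → a*a*b ∈ I := by
      intro hab2
      have hprod : a*a*b*(a+b) ∈ I := by
        refine memc (y := b*(a*a*a) + a*a*b*b) (by ring) ?_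
        exact I.add_mem (I.mul_mem_left _ ha3) h22
      rcases abs4 hI hprod with h | h | h | h
      · exact h
      · exact memc (y := a*a*(a+b) - a*a*a) (by ring) (I.sub_mem h ha3)
      · exact memc (y := a*b*(a+b) - a*b*b) (by ring) (I.sub_mem h hab2)
      · exact memc (y := a*b*(a+b) - a*b*b) (by ring) (I.sub_mem h hab2)
    rcases abs4 hI h22 with h | h | h | h
    · exact h
    · exact h
    · exact step (memc (by ring) h)
    · exact step (memc (by ring) h)
  -- step 3
  have huuv := sqm u v hu hv
  have huvv := sqm v u hv hu
  have huuw := sqm u w hu hw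
  have huww := sqm w u hw hu
  have hvvw := sqm v w hv hw
  have hvww := sqm w v hw hv
  have hprod : u*v*w*(u+v+w) ∈ I := by
    refine memc (y := w*(u*u*v) + w*(v*v*u) + u*(w*w*v)) (by ring) ?_
    exact I.add_mem (I.add_mem (I.mul_mem_left _ huuv) (I.mul_mem_left _ huvv))
      (I.mul_mem_left _ hvww)
  rcases abs4 hI hprod with h | h | h | h
  · exact h
  · exact memc (y := u*v*(u+v+w) - u*u*v - v*v*u) (by ring)
      (I.sub_mem (I.sub_mem h huuv) huvv)
  · exact memc (y := u*w*(u+v+w) - u*u*w - w*w*u) (by ring)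
      (I.sub_mem (I.sub_mem h huuw) huww)
  · exact memc (y := v*w*(u+v+w) - v*v*w - w*w*v) (by ring)
      (I.sub_mem (I.sub_mem h hvvw) hvww)

theorem contraN (hI : IsNAbsorbing I 3) {a u v : R}
    (hu : u ∈ I.radical) (hv : v ∈ I.radical)
    (ha2u : a*a*u ∈ I) (hauv : a*u*v ∉ I) : False := by
  have tuvv : u*v*v ∈ I := triple_mem hI hu hv hv
  have tuuv : u*u*v ∈ I := triple_mem hI hu hu hv
  -- (5)
  have h5 : a*(a+v)*v ∈ I := by
    have hprod : a*(a+v)*u*v ∈ I :=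
      memc (y := v*(a*a*u) + a*(u*v*v)) (by ring)
        (I.add_mem (I.mul_mem_left _ ha2u) (I.mul_mem_left _ tuvv))
    rcases abs4 hI hprod with h | h | h | h
    · exact absurd (memc (show a*u*v = a*(a+v)*u - a*a*u by ring) (I.sub_mem h ha2u)) hauv
    · exact h
    · exact absurd h hauv
    · exact absurd (memc (show a*u*v = (a+v)*u*v - u*v*v by ring) (I.sub_mem h tuvv)) hauv
  have hmain : a*(a+u)*u ∈ I ∨ a*(a+u)*v ∈ I := by
    have hprod : a*(a+u)*u*v ∈ I :=
      memc (y := v*(a*a*u) + a*(u*u*v)) (by ring)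
        (I.add_mem (I.mul_mem_left _ ha2u) (I.mul_mem_left _ tuuv))
    rcases abs4 hI hprod with h | h | h | h
    · exact Or.inl h
    · exact Or.inr h
    · exact absurd h hauv
    · exact absurd (memc (show a*u*v = (a+u)*u*v - u*u*v by ring) (I.sub_mem h tuuv)) hauv
  rcases hmain with h | h6
  · -- CASE 1 : a*u*u ∈ I
    have hau2 : a*u*u ∈ I := memc (show a*u*u = a*(a+u)*u - a*a*u by ring) (I.sub_mem h ha2u)
    have hprod : a*u*(u+v)*(a+v) ∈ I :=
      memc (y := a*(a*u*u) + v*(a*u*u) + v*(a*a*u) + a*(u*v*v)) (by ring)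
        (I.add_mem (I.add_mem (I.add_mem (I.mul_mem_left _ hau2) (I.mul_mem_left _ hau2))
          (I.mul_mem_left _ ha2u)) (I.mul_mem_left _ tuvv))
    rcases abs4 hI hprod with h | h | h | h
    · exact hauv (memc (show a*u*v = a*u*(u+v) - a*u*u by ring) (I.sub_mem h hau2))
    · exact hauv (memc (show a*u*v = a*u*(a+v) - a*a*u by ring) (I.sub_mem h ha2u))
    · exact hauv (memc (show a*u*v = a*(u+v)*(a+v) - a*a*u - a*(a+v)*v by ring)
        (I.sub_mem (I.sub_mem h ha2u) h5))
    · exact hauv (memc (show a*u*v = u*(u+v)*(a+v) - a*u*u - u*u*v - u*v*v by ring)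
        (I.sub_mem (I.sub_mem (I.sub_mem h hau2) tuuv) tuvv))
  · -- CASE 2 : h6 : a*(a+u)*v ∈ I  (= a²v + auv)
    have h7 : a*(a+v)*v - a*(a+u)*v ∈ I := I.sub_mem h5 h6
    have hau2v : a*u*u*v ∈ I :=
      memc (show a*u*u*v = u*(a*(a+u)*v) - v*(a*a*u) by ring)
        (I.sub_mem (I.mul_mem_left _ h6) (I.mul_mem_left _ ha2u))
    have hauv2 : a*u*v*v ∈ I :=
      memc (show a*u*v*v = u*(a*(a+v)*v - a*(a+u)*v) + a*u*u*v by ring)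
        (I.add_mem (I.mul_mem_left _ h7) hau2v)
    have h8 : a*u*u + a*u*v ∈ I := by
      have hprod : (a+u)*(a+v)*u*v ∈ I :=
        memc (y := v*(a*a*u) + a*u*u*v + a*u*v*v + v*(u*u*v)) (by ring)
          (I.add_mem (I.add_mem (I.add_mem (I.mul_mem_left _ ha2u) hau2v) hauv2)
            (I.mul_mem_left _ tuuv))
      rcases abs4 hI hprod with h | h | h | h
      · exact memc (show a*u*u + a*u*v = (a+u)*(a+v)*u - a*a*u - u*u*v by ring)
          (I.sub_mem (I.sub_mem h ha2u) tuuv)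
      · exact absurd (memc (show a*u*v =
          (a+u)*(a+v)*v - a*(a+u)*v - (a*(a+v)*v - a*(a+u)*v) - u*v*v by ring)
          (I.sub_mem (I.sub_mem (I.sub_mem h h6) h7) tuvv)) hauv
      · exact absurd (memc (show a*u*v = (a+u)*u*v - u*u*v by ring) (I.sub_mem h tuuv)) hauv
      · exact absurd (memc (show a*u*v = (a+v)*u*v - u*v*v by ring) (I.sub_mem h tuvv)) hauv
    have hprod : a*(a+v)*u*u ∈ I :=
      memc (y := u*(a*a*u) + a*u*u*v) (by ring)
        (I.add_mem (I.mul_mem_left _ ha2u) hau2v)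
    rcases abs4 hI hprod with h | h | h | h
    · exact hauv (memc (show a*u*v = a*(a+v)*u - a*a*u by ring) (I.sub_mem h ha2u))
    · exact hauv (memc (show a*u*v = a*(a+v)*u - a*a*u by ring) (I.sub_mem h ha2u))
    · exact hauv (memc (show a*u*v = (a*u*u + a*u*v) - a*u*u by ring) (I.sub_mem h8 h))
    · have hau2 : a*u*u ∈ I :=
        memc (show a*u*u = (a+v)*u*u - u*u*v by ring) (I.sub_mem h tuuv)
      exact hauv (memc (show a*u*v = (a*u*u + a*u*v) - a*u*u by ring) (I.sub_mem h8 hau2))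
theorem Qlem (hI : IsNAbsorbing I 3) {a b u v : R}
    (hu : u ∈ I.radical) (hv : v ∈ I.radical)
    (habuv : a*b*u*v ∈ I) (hauv : a*u*v ∉ I) (hbuv : b*u*v ∉ I)
    (habu : a*b*u ∈ I) : False := by
  have tuvv : u*v*v ∈ I := triple_mem hI hu hv hv
  have tuuv : u*u*v ∈ I := triple_mem hI hu hu hv
  have tvvv : v*v*v ∈ I := triple_mem hI hv hv hv
  have h1 : a*(b+v)*v ∈ I := by
    have hprod : a*(b+v)*u*v ∈ I :=
      memc (y := a*b*u*v + a*(u*v*v)) (by ring) (I.add_mem habuv (I.mul_mem_left _ tuvv))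
    rcases abs4 hI hprod with h | h | h | h
    · exact absurd (memc (show a*u*v = a*(b+v)*u - a*b*u by ring) (I.sub_mem h habu)) hauv
    · exact h
    · exact absurd h hauv
    · exact absurd (memc (show b*u*v = (b+v)*u*v - u*v*v by ring) (I.sub_mem h tuvv)) hbuv
  have h2 : (a+v)*b*v ∈ I := by
    have hprod : (a+v)*b*u*v ∈ I :=
      memc (y := a*b*u*v + b*(u*v*v)) (by ring) (I.add_mem habuv (I.mul_mem_left _ tuvv))
    rcases abs4 hI hprod with h | h | h | h
    · exact absurd (memc (show b*u*v = (a+v)*b*u - a*b*u by ring) (I.sub_mem h habu)) hbuv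
    · exact h
    · exact absurd (memc (show a*u*v = (a+v)*u*v - u*v*v by ring) (I.sub_mem h tuvv)) hauv
    · exact absurd h hbuv
  have hmain : a*u*v + b*u*v ∈ I ∨ b*v*v ∈ I := by
    have hprod : (a+v)*(b+v)*u*v ∈ I :=
      memc (y := a*b*u*v + a*(u*v*v) + b*(u*v*v) + v*(u*v*v)) (by ring)
        (I.add_mem (I.add_mem (I.add_mem habuv (I.mul_mem_left _ tuvv))
          (I.mul_mem_left _ tuvv)) (I.mul_mem_left _ tuvv))
    rcases abs4 hI hprod with h | h | h | h
    · exact Or.inl (memc (show a*u*v + b*u*v = (a+v)*(b+v)*u - a*b*u - u*v*v by ring)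
        (I.sub_mem (I.sub_mem h habu) tuvv))
    · exact Or.inr (memc (show b*v*v = (a+v)*(b+v)*v - a*(b+v)*v - v*v*v by ring)
        (I.sub_mem (I.sub_mem h h1) tvvv))
    · exact absurd (memc (show a*u*v = (a+v)*u*v - u*v*v by ring) (I.sub_mem h tuvv)) hauv
    · exact absurd (memc (show b*u*v = (b+v)*u*v - u*v*v by ring) (I.sub_mem h tuvv)) hbuv
  rcases hmain with hs | hbv2
  · -- branch α
    have ha2uv : a*a*u*v ∈ I :=
      memc (show a*a*u*v = a*(a*u*v + b*u*v) - a*b*u*v by ring)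
        (I.sub_mem (I.mul_mem_left _ hs) habuv)
    rcases abs4 hI ha2uv with h | h | h | h
    · exact contraN hI hu hv h hauv
    · exact contraN hI hv hu (memc (show a*a*v = a*a*v by ring) h)
        (fun hc => hauv (memc (show a*u*v = a*v*u by ring) hc))
    · exact hauv h
    · exact hauv h
  · -- branch β
    have habv : a*b*v ∈ I :=
      memc (show a*b*v = (a+v)*b*v - b*v*v by ring) (I.sub_mem h2 hbv2)
    have hav2 : a*v*v ∈ I :=
      memc (show a*v*v = a*(b+v)*v - a*b*v by ring) (I.sub_mem h1 habv)
    have hau2 : a*u*u ∈ I := by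
      have hprod : a*(b+u)*v*u ∈ I :=
        memc (y := a*b*u*v + a*(u*u*v)) (by ring) (I.add_mem habuv (I.mul_mem_left _ tuuv))
      rcases abs4 hI hprod with h | h | h | h
      · exact absurd (memc (show a*u*v = a*(b+u)*v - a*b*v by ring) (I.sub_mem h habv)) hauv
      · exact memc (show a*u*u = a*(b+u)*u - a*b*u by ring) (I.sub_mem h habu)
      · exact absurd (memc (show a*u*v = a*v*u by ring) h) hauv
      · exact absurd (memc (show b*u*v = (b+u)*v*u - u*u*v by ring) (I.sub_mem h tuuv)) hbuv
    have hbu2 : b*u*u ∈ I := by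
      have hprod : (a+u)*b*v*u ∈ I :=
        memc (y := a*b*u*v + b*(u*u*v)) (by ring) (I.add_mem habuv (I.mul_mem_left _ tuuv))
      rcases abs4 hI hprod with h | h | h | h
      · exact absurd (memc (show b*u*v = (a+u)*b*v - a*b*v by ring) (I.sub_mem h habv)) hbuv
      · exact memc (show b*u*u = (a+u)*b*u - a*b*u by ring) (I.sub_mem h habu)
      · exact absurd (memc (show a*u*v = (a+u)*v*u - u*u*v by ring) (I.sub_mem h tuuv)) hauv
      · exact absurd (memc (show b*u*v = b*v*u by ring) h) hbuv
    have hprod : b*(a+u)*v*(u+v) ∈ I :=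
      memc (y := a*b*u*v + v*(a*b*v) + v*(b*u*u) + b*(u*v*v)) (by ring)
        (I.add_mem (I.add_mem (I.add_mem habuv (I.mul_mem_left _ habv))
          (I.mul_mem_left _ hbu2)) (I.mul_mem_left _ tuvv))
    rcases abs4 hI hprod with h | h | h | h
    · exact hbuv (memc (show b*u*v = b*(a+u)*v - a*b*v by ring) (I.sub_mem h habv))
    · exact hbuv (memc (show b*u*v = b*(a+u)*(u+v) - a*b*u - a*b*v - b*u*u by ring)
        (I.sub_mem (I.sub_mem (I.sub_mem h habu) habv) hbu2))
    · exact hbuv (memc (show b*u*v = b*v*(u+v) - b*v*v by ring) (I.sub_mem h hbv2))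
    · exact hauv (memc (show a*u*v = (a+u)*v*(u+v) - a*v*v - u*u*v - u*v*v by ring)
        (I.sub_mem (I.sub_mem (I.sub_mem h hav2) tuuv) tuvv))

theorem contraMain (hI : IsNAbsorbing I 3) {a b u v : R}
    (hu : u ∈ I.radical) (hv : v ∈ I.radical)
    (habuv : a*b*u*v ∈ I) (hauv : a*u*v ∉ I) (hbuv : b*u*v ∉ I) : False := by
  rcases abs4 hI habuv with h | h | h | h
  · exact Qlem hI hu hv habuv hauv hbuv h
  · exact Qlem hI hv hu (memc (by ring) habuv)
      (fun hc => hauv (memc (by ring) hc)) (fun hc => hbuv (memc (by ring) hc)) h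
  · exact hauv h
  · exact hbuv h

theorem primeColon (hI : IsNAbsorbing I 3) {u v : R}
    (hu : u ∈ I.radical) (hv : v ∈ I.radical) (huv : u*v ∉ I) :
    (I.colon (Ideal.span {u*v})).IsPrime := by
  constructor
  · intro htop
    have h1 : (1:R) ∈ I.colon (Ideal.span {u*v}) := htop.symm ▸ Submodule.mem_top
    exact huv (by simpa using Ideal.mem_colon_span_singleton.mp h1)
  · intro r s hrs
    by_contra hcon
    push_neg at hcon
    obtain ⟨hr, hs⟩ := hcon
    have hrs' : r*s*(u*v) ∈ I := Ideal.mem_colon_span_singleton.mp hrs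
    have hr' : r*(u*v) ∉ I := fun hc => hr (Ideal.mem_colon_span_singleton.mpr hc)
    have hs' : s*(u*v) ∉ I := fun hc => hs (Ideal.mem_colon_span_singleton.mpr hc)
    exact contraMain hI hu hv (a := r) (b := s)
      (memc (show r*s*u*v = r*s*(u*v) by ring) hrs')
      (fun hc => hr' (memc (show r*(u*v) = r*u*v by ring) hc))
      (fun hc => hs' (memc (show s*(u*v) = s*u*v by ring) hc))

end Aux

theorem colon_chain_and_prime {R : Type*} [CommRing R] (I : Ideal R)
    (hI : IsNAbsorbing I 3) (hP : I.radical.IsPrime) (x y z : R)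
    (hx : x ∈ I.radical) (hy : y ∈ I.radical) (hz : z ∈ I.radical) :
    (I.colon (Ideal.span {x * z}) ≤ I.colon (Ideal.span {x * y}) ∨
      I.colon (Ideal.span {x * y}) ≤ I.colon (Ideal.span {x * z})) ∧
    (x * y ∉ I → (I.colon (Ideal.span {x * y})).IsPrime) := by
  constructor
  · by_contra hcon
    push_neg at hcon
    obtain ⟨h1, h2⟩ := hcon
    obtain ⟨a, ha1, ha2⟩ := SetLike.not_le_iff_exists.mp h1
    obtain ⟨b, hb1, hb2⟩ := SetLike.not_le_iff_exists.mp h2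
    have haxz : a*(x*z) ∈ I := Ideal.mem_colon_span_singleton.mp ha1
    have haxy : a*(x*y) ∉ I := fun hc => ha2 (Ideal.mem_colon_span_singleton.mpr hc)
    have hbxy : b*(x*y) ∈ I := Ideal.mem_colon_span_singleton.mp hb1
    have hbxz : b*(x*z) ∉ I := fun hc => hb2 (Ideal.mem_colon_span_singleton.mpr hc)
    have hw : x*(y+z) ∉ I := by
      intro hc
      exact haxy (memc (show a*(x*y) = a*(x*(y+z)) - a*(x*z) by ring)
        (I.sub_mem (I.mul_mem_left _ hc) haxz))
    have hprime := primeColon hI hx (I.radical.add_mem hy hz) hw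
    have hab : a*b ∈ I.colon (Ideal.span {x*(y+z)}) :=
      Ideal.mem_colon_span_singleton.mpr (memc
        (show a*b*(x*(y+z)) = b*(a*(x*z)) + a*(b*(x*y)) by ring)
        (I.add_mem (I.mul_mem_left _ haxz) (I.mul_mem_left _ hbxy)))
    rcases hprime.mem_or_mem hab with h | h
    · have := Ideal.mem_colon_span_singleton.mp h
      exact haxy (memc (show a*(x*y) = a*(x*(y+z)) - a*(x*z) by ring)
        (I.sub_mem this haxz))
    · have := Ideal.mem_colon_span_singleton.mp h
      exact hbxz (memc (show b*(x*z) = b*(x*(y+z)) - b*(x*y) by ring)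
        (I.sub_mem this hbxy))
  · intro hxy
    exact primeColon hI hx hy hxy
end

section
/- Let the zero ideal of a commutative ring R be n-absorbing, and let a₁,…,a_n be nilpotent elements of R. If J = (a₁,…,a_n) and k satisfies k ≥ n² − n + 1, then J^k = 0. -/
lemma pow_n_eq_zero {R : Type*} [CommRing R] {n : ℕ} (hn : 0 < n)
    (h : IsNAbsorbing (⊥ : Ideal R) n) {x : R} (hx : IsNilpotent x) : x ^ n = 0 := by
  obtain ⟨m, hm⟩ := hx
  induction m using Nat.strong_induction_on generalizing x with
  | _ m ih =>
    rcases le_or_gt m n with hmn | hmn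
    · calc x ^ n = x ^ m * x ^ (n - m) := by rw [← pow_add]; congr 1; omega
        _ = 0 := by rw [hm, zero_mul]
    · have hsum : ∑ j : Fin (n + 1), (if j = Fin.last n then m - n else 1) = m := by
        have h1 : ∑ j : Fin (n + 1), (if j = Fin.last n then m - n else 1)
            = (∑ _i : Fin n, 1) + (m - n) := by
          rw [Fin.sum_univ_castSucc, if_pos rfl]
          congr 1
          exact Finset.sum_congr rfl fun i _ => if_neg (Fin.castSucc_lt_last i).ne
        simp only [Finset.sum_const, Finset.card_univ, Fintype.card_fin, smul_eq_mul,
          mul_one] at h1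
        omega
      have hprod : (∏ j : Fin (n + 1), x ^ (if j = Fin.last n then m - n else 1))
          ∈ (⊥ : Ideal R) := by
        rw [Finset.prod_pow_eq_pow_sum, hsum, hm]; exact Submodule.zero_mem _
      obtain ⟨i, hi⟩ := h _ hprod
      rw [Finset.prod_pow_eq_pow_sum, Ideal.mem_bot] at hi
      have hS : (∑ j ∈ Finset.univ.erase i, (if j = Fin.last n then m - n else 1))
          + (if i = Fin.last n then m - n else 1) = m := by
        rw [Finset.sum_erase_add _ _ (Finset.mem_univ i), hsum]
      by_cases hil : i = Fin.last n
      · rw [if_pos hil] at hS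
        have : (∑ j ∈ Finset.univ.erase i, (if j = Fin.last n then m - n else 1)) = n := by
          omega
        rwa [this] at hi
      · rw [if_neg hil] at hS
        have : (∑ j ∈ Finset.univ.erase i, (if j = Fin.last n then m - n else 1)) = m - 1 := by
          omega
        rw [this] at hi
        exact ih (m - 1) (by omega) hi

theorem span_nilpotents_pow_eq_bot_of_large {R : Type*} [CommRing R] (n : ℕ)
    (hn : 0 < n) (h : IsNAbsorbing (⊥ : Ideal R) n) (a : Fin n → R)
    (ha : ∀ i, IsNilpotent (a i)) (k : ℕ) (hk : n ^ 2 - n + 1 ≤ k) :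
    (Ideal.span (Set.range a)) ^ k = ⊥ := by
  have ha' : ∀ i, a i ^ n = 0 := fun i => pow_n_eq_zero hn h (ha i)
  rw [Ideal.span, Submodule.span_pow, ← le_bot_iff, Submodule.span_le]
  intro x hx
  rw [Set.mem_pow] at hx
  obtain ⟨f, hf⟩ := hx
  choose g hg using fun j => (f j).2
  have hlt : Fintype.card (Fin n) * (n - 1) < Fintype.card (Fin k) := by
    simp only [Fintype.card_fin]
    have h1 : n * (n - 1) + n * 1 = n * n := by rw [← Nat.mul_add, Nat.sub_add_cancel hn]
    have h2 : n ^ 2 = n * n := sq n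
    omega
  obtain ⟨i, hi⟩ := Fintype.exists_lt_card_fiber_of_mul_lt_card (f := g) hlt
  have hzero : x = 0 := by
    rw [← hf, List.prod_ofFn, ← Finset.prod_filter_mul_prod_filter_not Finset.univ
      (fun j => g j = i)]
    have h3 : ∏ j ∈ Finset.univ.filter (fun j => g j = i), (f j : R)
        = a i ^ (Finset.univ.filter fun j : Fin k => g j = i).card := by
      rw [← Finset.prod_const]
      exact Finset.prod_congr rfl fun j hj => by
        rw [← hg j, (Finset.mem_filter.mp hj).2]
    rw [h3]
    have hcard : n ≤ (Finset.univ.filter fun j : Fin k => g j = i).card := by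
      have := hi
      omega
    have h4 : a i ^ (Finset.univ.filter fun j : Fin k => g j = i).card = 0 := by
      calc a i ^ (Finset.univ.filter fun j : Fin k => g j = i).card
          = a i ^ n * a i ^ ((Finset.univ.filter fun j : Fin k => g j = i).card - n) := by
            rw [← pow_add]; congr 1; omega
        _ = 0 := by rw [ha', zero_mul]
    rw [h4, zero_mul]
  simp [hzero]
end

section
/- Let I be a 2-absorbing ideal of a commutative ring R with √I = P prime, and let a ∈ P with a ∉ I. Then (I : a) is a prime ideal of R. -/
private lemma erase0 {R : Type*} [CommRing R] (f : Fin 3 → R) :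
    ∏ j ∈ Finset.univ.erase (0:Fin 3), f j = f 1 * f 2 := by
  rw [show Finset.univ.erase (0:Fin 3) = {1,2} from by decide]; simp

private lemma erase1 {R : Type*} [CommRing R] (f : Fin 3 → R) :
    ∏ j ∈ Finset.univ.erase (1:Fin 3), f j = f 0 * f 2 := by
  rw [show Finset.univ.erase (1:Fin 3) = {0,2} from by decide]; simp

private lemma erase2 {R : Type*} [CommRing R] (f : Fin 3 → R) :
    ∏ j ∈ Finset.univ.erase (2:Fin 3), f j = f 0 * f 1 := by
  rw [show Finset.univ.erase (2:Fin 3) = {0,1} from by decide]; simp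

private lemma absorb3 {R : Type*} [CommRing R] {I : Ideal R} (hI : IsNAbsorbing I 2)
    {x y z : R} (h : x * y * z ∈ I) : y * z ∈ I ∨ x * z ∈ I ∨ x * y ∈ I := by
  obtain ⟨i, hi⟩ := hI ![x, y, z] (by
    rw [Fin.prod_univ_three]; simpa using h)
  fin_cases i
  · left; simpa [erase0] using hi
  · right; left; simpa [erase1] using hi
  · right; right; simpa [erase2] using hi

private lemma sq_mem {R : Type*} [CommRing R] {I : Ideal R} (hI : IsNAbsorbing I 2)
    {x : R} (hx : x ∈ I.radical) : x * x ∈ I := by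
  obtain ⟨n, hn⟩ := hx
  induction n using Nat.strong_induction_on with
  | _ n ih =>
    match n, hn with
    | 0, hn => simpa using I.mul_mem_left (x*x) hn
    | 1, hn => exact I.mul_mem_left x (by simpa using hn)
    | 2, hn => rw [pow_two] at hn; exact hn
    | (m+3), hn =>
      have h : x * x * x ^ (m+1) ∈ I := by
        have e : x * x * x ^ (m+1) = x ^ (m+3) := by ring
        rw [e]; exact hn
      have e2 : x ^ (m+2) = x * x ^ (m+1) := by ring
      rcases absorb3 hI h with h' | h' | h'
      · exact ih (m+2) (by omega) (by rw [e2]; exact h')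
      · exact ih (m+2) (by omega) (by rw [e2]; exact h')
      · exact h'

private lemma rad_mul_mem {R : Type*} [CommRing R] {I : Ideal R} (hI : IsNAbsorbing I 2)
    {x y : R} (hx : x ∈ I.radical) (hy : y ∈ I.radical) : x * y ∈ I := by
  have hxy : x * y * (x + y) ∈ I := by
    have : x * y * (x + y) = (x*x)*y + x*(y*y) := by ring
    rw [this]
    exact I.add_mem (I.mul_mem_right y (sq_mem hI hx)) (I.mul_mem_left x (sq_mem hI hy))
  rcases absorb3 hI hxy with h | h | h
  · have : x * y = y * (x + y) - y*y := by ring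
    rw [this]; exact I.sub_mem h (sq_mem hI hy)
  · have : x * y = x * (x + y) - x*x := by ring
    rw [this]; exact I.sub_mem h (sq_mem hI hx)
  · exact h

theorem colon_prime_of_two_absorbing {R : Type*} [CommRing R] (I : Ideal R)
    (hI : IsNAbsorbing I 2) (hP : I.radical.IsPrime) (a : R)
    (ha : a ∈ I.radical) (haI : a ∉ I) :
    (I.colon (Ideal.span {a})).IsPrime := by
  constructor
  · intro h
    have : (1:R) ∈ I.colon (Ideal.span {a}) := h ▸ Submodule.mem_top
    rw [Ideal.mem_colon_span_singleton, one_mul] at this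
    exact haI this
  · intro x y hxy
    rw [Ideal.mem_colon_span_singleton] at hxy
    rw [Ideal.mem_colon_span_singleton, Ideal.mem_colon_span_singleton]
    rcases absorb3 hI hxy with h | h | h
    · right; exact h
    · left; exact h
    · -- x * y ∈ I, so x ∈ radical or y ∈ radical
      rcases hP.mem_or_mem (Ideal.le_radical h) with hx | hy
      · left; exact rad_mul_mem hI hx ha
      · right; exact rad_mul_mem hI hy ha
end
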